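/- Let n be a positive integer, let A and B be diagonal positive definite real n×n matrices, and let a, b ∈ ℝⁿ. For λ ∈ [0,1] define E_λ = λA + (1−λ)B and m_λ = E_λ⁻¹(λA a + (1−λ)B b). Then the function λ ↦ ‖m_λ − a‖_A is monotonically decreasing on [0,1]; that is, for all 0 ≤ λ₁ ≤ λ₂ ≤ 1 one has ‖m_{λ₂} − a‖_A ≤ ‖m_{λ₁} − a‖_A. -/

import Mathlib

open Matrix

/-- The path point `m_λ = (λA + (1-λ)B)⁻¹ (λA a + (1-λ)B b)`. -/
noncomputable def mPath {n : ℕ} (A B : Matrix (Fin n) (Fin n) ℝ) (a b : Fin n → ℝ)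
    (lam : ℝ) : Fin n → ℝ :=
  (lam • A + (1 - lam) • B)⁻¹ *ᵥ (lam • (A *ᵥ a) + (1 - lam) • (B *ᵥ b))

/-- The norm `‖w‖_M = √(wᵀ M w)`. -/
noncomputable def matNorm {n : ℕ} (M : Matrix (Fin n) (Fin n) ℝ) (w : Fin n → ℝ) : ℝ :=
  Real.sqrt (w ⬝ᵥ (M *ᵥ w))

/-!
For diagonal `A = diag α`, `B = diag β` everything decouples coordinatewise:
`(m_λ - a)ᵢ = wᵢ(λ) (bᵢ - aᵢ)` with the weight `wᵢ(λ) = (1-λ)βᵢ / (λαᵢ + (1-λ)βᵢ)`, which is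
nonnegative and decreasing on `[0,1]`. Hence every coordinate of `m_λ - a` shrinks in absolute
value as `λ` grows, and so does any norm `‖·‖_A` with `A` diagonal and nonnegative.
-/

open Set

noncomputable def pathWeight (p q l : ℝ) : ℝ :=
  (1 - l) * q / (l * p + (1 - l) * q)

section pathWeight

variable {p q : ℝ}

lemma convexComb_pos (hp : 0 < p) (hq : 0 < q) {l : ℝ} (hl : l ∈ Icc (0 : ℝ) 1) :
    0 < l * p + (1 - l) * q := by
  obtain ⟨hl0, hl1⟩ := hl
  rcases hl0.eq_or_lt with rfl | hl0
  · simpa using hq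
  · nlinarith

lemma pathWeight_nonneg (hp : 0 < p) (hq : 0 < q) {l : ℝ} (hl : l ∈ Icc (0 : ℝ) 1) :
    0 ≤ pathWeight p q l :=
  div_nonneg (mul_nonneg (sub_nonneg.2 hl.2) hq.le) (convexComb_pos hp hq hl).le

lemma pathWeight_antitoneOn (hp : 0 < p) (hq : 0 < q) :
    AntitoneOn (pathWeight p q) (Icc 0 1) := by
  intro l₁ hl₁ l₂ hl₂ h
  rw [pathWeight, pathWeight, div_le_div_iff₀ (convexComb_pos hp hq hl₂) (convexComb_pos hp hq hl₁)]
  -- after cross-multiplying, the difference of the two sides is `p q (l₂ - l₁)`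
  nlinarith [mul_nonneg (mul_nonneg (sub_nonneg.2 h) hp.le) hq.le]

end pathWeight

lemma inv_diagonal_of_ne_zero {ι K : Type*} [Fintype ι] [DecidableEq ι] [Field K] {d : ι → K}
    (hd : ∀ i, d i ≠ 0) :
    (diagonal d)⁻¹ = diagonal d⁻¹ := by
  apply inv_eq_left_inv
  rw [diagonal_mul_diagonal, ← diagonal_one]
  exact congrArg diagonal (funext fun i => inv_mul_cancel₀ (hd i))

section diagonal

variable {n : ℕ}

lemma mPath_diagonal_sub_apply {dA dB : Fin n → ℝ} (a b : Fin n → ℝ) {l : ℝ}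
    (hl : ∀ i, l * dA i + (1 - l) * dB i ≠ 0) (i : Fin n) :
    (mPath (diagonal dA) (diagonal dB) a b l - a) i = pathWeight (dA i) (dB i) l * (b i - a i) := by
  have hE : l • diagonal dA + (1 - l) • diagonal dB
      = diagonal fun i => l * dA i + (1 - l) * dB i := by
    rw [← diagonal_smul, ← diagonal_smul, diagonal_add]
    rfl
  rw [mPath, hE, inv_diagonal_of_ne_zero hl]
  simp only [Pi.sub_apply, mulVec_diagonal, Pi.add_apply, Pi.smul_apply, Pi.inv_apply,
    smul_eq_mul, pathWeight]
  field_simp [hl i]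
  ring

lemma matNorm_diagonal_le {d : Fin n → ℝ} (hd : ∀ i, 0 ≤ d i) {v w : Fin n → ℝ}
    (hvw : ∀ i, |v i| ≤ |w i|) : matNorm (diagonal d) v ≤ matNorm (diagonal d) w := by
  refine Real.sqrt_le_sqrt (Finset.sum_le_sum fun i _ => ?_)
  simp only [mulVec_diagonal]
  have hsq : v i * v i ≤ w i * w i := by
    simpa only [abs_mul_abs_self] using mul_self_le_mul_self (abs_nonneg _) (hvw i)
  nlinarith [hd i]

end diagonal

theorem mPath_norm_to_a_antitone_general {n : ℕ}
    (A B : Matrix (Fin n) (Fin n) ℝ) (dA dB : Fin n → ℝ)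
    (hA : A = Matrix.diagonal dA) (hB : B = Matrix.diagonal dB)
    (hdA : ∀ i, 0 < dA i) (hdB : ∀ i, 0 < dB i)
    (a b : Fin n → ℝ) :
    ∀ l1 l2 : ℝ, 0 ≤ l1 → l1 ≤ l2 → l2 ≤ 1 →
      matNorm A (mPath A B a b l2 - a) ≤ matNorm A (mPath A B a b l1 - a) := by
  subst hA hB
  intro l1 l2 h0 h12 h21
  have hl1 : l1 ∈ Icc (0 : ℝ) 1 := ⟨h0, h12.trans h21⟩
  have hl2 : l2 ∈ Icc (0 : ℝ) 1 := ⟨h0.trans h12, h21⟩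
  refine matNorm_diagonal_le (fun i => (hdA i).le) fun i => ?_
  rw [mPath_diagonal_sub_apply a b (fun j => (convexComb_pos (hdA j) (hdB j) hl2).ne'),
    mPath_diagonal_sub_apply a b (fun j => (convexComb_pos (hdA j) (hdB j) hl1).ne'),
    abs_mul, abs_mul, abs_of_nonneg (pathWeight_nonneg (hdA i) (hdB i) hl1),
    abs_of_nonneg (pathWeight_nonneg (hdA i) (hdB i) hl2)]
  gcongr
  exact pathWeight_antitoneOn (hdA i) (hdB i) hl1 hl2 h12

theorem mPath_norm_to_a_antitone {n : ℕ} (hn : 0 < n)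
    (A B : Matrix (Fin n) (Fin n) ℝ) (dA dB : Fin n → ℝ)
    (hA : A = Matrix.diagonal dA) (hB : B = Matrix.diagonal dB)
    (hdA : ∀ i, 0 < dA i) (hdB : ∀ i, 0 < dB i)
    (a b : Fin n → ℝ) :
    ∀ l1 l2 : ℝ, 0 ≤ l1 → l1 ≤ l2 → l2 ≤ 1 →
      matNorm A (mPath A B a b l2 - a) ≤ matNorm A (mPath A B a b l1 - a) :=
  mPath_norm_to_a_antitone_general A B dA dB hA hB hdA hdB a b
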